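/- Let D be a modified Rota-Baxter operator of weight λ on a (possibly non-unital) associative K-algebra A. Then the bilinear operation π^D on A defined by π^D(x,y) = D(x)·y + x·D(y) is associative, i.e., (A, π^D) is an associative algebra. -/
import Mathlib


/-- The product `π^D(x,y) = D(x)·y + x·D(y)` induced by a modified Rota-Baxter operator. -/
def piD {K : Type*} [Field K] {A : Type*} [AddCommGroup A] [Module K A]
    (m : A →ₗ[K] A →ₗ[K] A) (D : A →ₗ[K] A) (x y : A) : A :=
  m (D x) y + m x (D y)

/-- if `D` is a modified Rota-Baxter operator of weight `λ`, then
`π^D(x,y) = D(x)·y + x·D(y)` is an associative product on `A`. -/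
theorem stmt2 {K : Type*} [Field K] {A : Type*} [AddCommGroup A] [Module K A]
    (m : A →ₗ[K] A →ₗ[K] A)
    (assoc : ∀ x y z : A, m (m x y) z = m x (m y z)) (lam : K)
    (D : A →ₗ[K] A)
    (hD : ∀ x y : A, m (D x) (D y) - D (m x (D y)) - D (m (D x) y) = -(lam • m x y)) :
    ∀ x y z : A, piD m D (piD m D x y) z = piD m D x (piD m D y z) := by
  have key : ∀ x y : A, D (piD m D x y) = m (D x) (D y) + lam • m x y := by
    intro x y
    have h := hD x y
    simp only [piD, map_add]
    have h' : m (D x) (D y) = D (m x (D y)) + D (m (D x) y) - lam • m x y := by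
      rw [sub_sub, sub_eq_iff_eq_add] at h
      rw [h]; abel
    rw [h']; abel
  intro x y z
  conv_lhs => rw [piD, key x y, piD]
  conv_rhs => rw [piD, key y z, piD]
  simp only [map_add, map_smul, LinearMap.add_apply, LinearMap.smul_apply, assoc]
  abel
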